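/- Let R be an unambiguous regex over Σ. If either ε ∈ L(R) or the languages L(R) and L(R*) overlap, then the star R* is infinitely ambiguous. (The ⟸ direction of the paper's Theorem 3(a), stated separately.) -/

import Mathlib

/-! Shared definitions: words, word power, parse trees of regular expressions,
(un)ambiguity, finite/infinite ambiguity, and the Brabrand–Thomsen overlap. -/

universe u

variable {α : Type u}

/-- `wpow w n` is the `n`-fold concatenation `w^n` of the word `w` with itself. -/
def wpow (w : List α) : ℕ → List α
  | 0 => []
  | n + 1 => w ++ wpow w n

/-- Parse trees of a regular expression for a word, defined inductively:
the regex `ε` has a unique parse tree for the empty word; the character regex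
for `a` has a unique parse tree for the word `[a]`; a parse tree of `R₁ + R₂`
(alternation) for `w` is a parse tree of `R₁` for `w` or a parse tree of `R₂`
for `w` (the two sides distinct); a parse tree of `R₁ * R₂` (concatenation)
for `w` is a decomposition `w = u ++ v` with parse trees of `R₁` for `u` and
of `R₂` for `v`; a parse tree of `R*` for `w` is a finite list of words
(possibly empty entries) concatenating to `w` with a parse tree of `R` for each. -/
inductive ParseTree : RegularExpression α → List α → Type u where
  | eps : ParseTree RegularExpression.epsilon []
  | char (a : α) : ParseTree (RegularExpression.char a) [a]
  | plusLeft {R₁ R₂ : RegularExpression α} {w : List α} :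
      ParseTree R₁ w → ParseTree (R₁ + R₂) w
  | plusRight {R₁ R₂ : RegularExpression α} {w : List α} :
      ParseTree R₂ w → ParseTree (R₁ + R₂) w
  | comp {R₁ R₂ : RegularExpression α} {u v : List α} :
      ParseTree R₁ u → ParseTree R₂ v → ParseTree (R₁ * R₂) (u ++ v)
  | starNil {R : RegularExpression α} : ParseTree R.star []
  | starCons {R : RegularExpression α} {u v : List α} :
      ParseTree R u → ParseTree R.star v → ParseTree R.star (u ++ v)

/-- A regex is unambiguous if every word has at most one parse tree of it. -/
def Unambiguous (R : RegularExpression α) : Prop :=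
  ∀ (w : List α) (t₁ t₂ : ParseTree R w), t₁ = t₂

/-- A regex is ambiguous if some word has two distinct parse trees of it. -/
def Ambiguous (R : RegularExpression α) : Prop :=
  ∃ (w : List α) (t₁ t₂ : ParseTree R w), t₁ ≠ t₂

/-- The word `w` has at least `k` distinct parse trees of `R`. -/
def HasAtLeastTrees (R : RegularExpression α) (w : List α) (k : ℕ) : Prop :=
  ∃ l : List (ParseTree R w), l.Nodup ∧ k ≤ l.length

/-- Every word has at most `k` parse trees of `R`. -/
def BoundedBy (R : RegularExpression α) (k : ℕ) : Prop :=
  ∀ (w : List α) (l : List (ParseTree R w)), l.Nodup → l.length ≤ k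

/-- `R` is finitely ambiguous: ambiguous, with a uniform bound on the number
of parse trees of any word. -/
def FinitelyAmbiguous (R : RegularExpression α) : Prop :=
  Ambiguous R ∧ ∃ k : ℕ, BoundedBy R k

/-- `R` is infinitely ambiguous: for every `k` some word has more than `k`
parse trees of `R`. -/
def InfinitelyAmbiguous (R : RegularExpression α) : Prop :=
  ∀ k : ℕ, ∃ w : List α, HasAtLeastTrees R w (k + 1)

/-- Languages `L₁` and `L₂` overlap (nonemptiness of the Brabrand–Thomsen
overlap operator): there are words `x`, `y` and a nonempty word `a` with
`x ∈ L₁`, `x ++ a ∈ L₁`, `a ++ y ∈ L₂`, and `y ∈ L₂`. -/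
def Overlaps (L₁ L₂ : Language α) : Prop :=
  ∃ x y a : List α, a ≠ [] ∧ x ∈ L₁ ∧ x ++ a ∈ L₁ ∧ a ++ y ∈ L₂ ∧ y ∈ L₂

/-! Distinct parse trees `s`, `t` of `R*` for one word `w` give the `k + 1` parse trees
`s^i t^(k-i)` of `w^k`. They are told apart by their sequences of pieces, because in a free
monoid `P^i Q^(k-i) = P^j Q^(k-j)` with `P ≠ Q` forces `i = j`. If `ε ∈ L(R)`, take `w = ε`
parsed with zero or with one empty piece; an overlap `x, x a ∈ L(R)`, `a y, y ∈ L(R*)` gives the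
two parses `x · (a y)` and `(x a) · y` of `w = x a y`. -/

theorem wpow_add (w : List α) (m n : ℕ) : wpow w (m + n) = wpow w m ++ wpow w n := by
  induction m with
  | zero => simp [wpow]
  | succ m ih => rw [Nat.succ_add, wpow, wpow, ih, List.append_assoc]

namespace List

variable {β : Type*}

theorem eq_of_flatten_replicate_eq {d : ℕ} (hd : d ≠ 0) {P Q : List β}
    (h : (replicate d P).flatten = (replicate d Q).flatten) : P = Q := by
  obtain ⟨d, rfl⟩ := Nat.exists_eq_succ_of_ne_zero hd
  have hlen : P.length = Q.length := by
    simpa [Nat.mul_comm] using congrArg length h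
  simp only [replicate_succ, flatten_cons] at h
  exact (append_inj h hlen).1

theorem eq_of_flatten_replicate_append_eq {P Q : List β} (hPQ : P ≠ Q) {i j k : ℕ}
    (hi : i ≤ k) (hj : j ≤ k)
    (h : (replicate i P).flatten ++ (replicate (k - i) Q).flatten =
      (replicate j P).flatten ++ (replicate (k - j) Q).flatten) : i = j := by
  wlog hij : i ≤ j generalizing i j
  · exact (this hj hi h.symm (by omega)).symm
  obtain ⟨d, rfl⟩ := Nat.exists_eq_add_of_le hij
  rw [replicate_add, flatten_append, append_assoc, append_right_inj,
    show k - i = d + (k - (i + d)) by omega, replicate_add, flatten_append,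
    append_left_inj] at h
  by_contra hd
  exact hPQ (eq_of_flatten_replicate_eq (by omega) h).symm

end List

namespace ParseTree

variable {R : RegularExpression α}

theorem nonempty_of_mem_matches' : ∀ {R : RegularExpression α} {w : List α},
    w ∈ R.matches' → Nonempty (ParseTree R w)
  | .zero, _, hw => hw.elim
  | .epsilon, _, rfl => ⟨eps⟩
  | .char a, _, rfl => ⟨char a⟩
  | .plus _ _, _, .inl hw => ⟨plusLeft (nonempty_of_mem_matches' hw).some⟩
  | .plus _ _, _, .inr hw => ⟨plusRight (nonempty_of_mem_matches' hw).some⟩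
  | .comp _ _, _, ⟨_, hu, _, hv, rfl⟩ =>
      ⟨comp (nonempty_of_mem_matches' hu).some (nonempty_of_mem_matches' hv).some⟩
  | .star R, _, hw => by
      obtain ⟨L, rfl, hL⟩ := Language.mem_kstar.1 hw
      clear hw
      induction L with
      | nil => exact ⟨starNil⟩
      | cons u L ih =>
          exact ⟨starCons (nonempty_of_mem_matches' (hL u (by simp))).some
            (ih fun v hv => hL v (by simp [hv])).some⟩

def pieces : {w : List α} → ParseTree R.star w → List (List α)
  | _, starNil => []
  | _, starCons (u := u) _ s => u :: pieces s

@[simp]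
theorem pieces_starNil : (starNil : ParseTree R.star []).pieces = [] := by
  rw [pieces]

@[simp]
theorem pieces_starCons {u v : List α} (t : ParseTree R u) (s : ParseTree R.star v) :
    (starCons t s).pieces = u :: s.pieces := by
  rw [pieces]

@[simp]
theorem pieces_cast {u v : List α} (h : u = v) (t : ParseTree R.star u) :
    (h ▸ t).pieces = t.pieces := by
  subst h; rfl

def starAppend : {u v : List α} → ParseTree R.star u → ParseTree R.star v →
    ParseTree R.star (u ++ v)
  | _, _, starNil, s => s
  | _, _, starCons t s', s => (List.append_assoc _ _ _).symm ▸ starCons t (starAppend s' s)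

@[simp]
theorem pieces_starAppend : ∀ {u v : List α} (s : ParseTree R.star u) (t : ParseTree R.star v),
    (starAppend s t).pieces = s.pieces ++ t.pieces
  | _, _, starNil, _ => by simp [starAppend]
  | _, _, starCons _ s', t => by simp [starAppend, pieces_starAppend s' t]

def starPow {w : List α} (t : ParseTree R.star w) : (n : ℕ) → ParseTree R.star (wpow w n)
  | 0 => starNil
  | n + 1 => starAppend t (starPow t n)

@[simp]
theorem pieces_starPow {w : List α} (t : ParseTree R.star w) (n : ℕ) :
    (t.starPow n).pieces = (List.replicate n t.pieces).flatten := by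
  induction n with
  | zero => exact pieces_starNil
  | succ n ih =>
    rw [show (t.starPow (n + 1)).pieces = (t.starAppend (t.starPow n)).pieces from rfl,
      pieces_starAppend, ih, List.replicate_succ, List.flatten_cons]

end ParseTree

open ParseTree in
theorem infinitelyAmbiguous_star_of_pieces_ne {R : RegularExpression α} {w : List α}
    (s t : ParseTree R.star w) (hst : s.pieces ≠ t.pieces) : InfinitelyAmbiguous R.star := by
  intro k
  let tree (i : Fin (k + 1)) : ParseTree R.star (wpow w k) :=
    (show wpow w i ++ wpow w (k - i) = wpow w k by rw [← wpow_add, Nat.add_sub_cancel' i.is_le]) ▸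
      starAppend (s.starPow i) (t.starPow (k - i))
  have tree_injective : Function.Injective tree := fun i j hij => by
    have h := congrArg pieces hij
    simp only [tree, pieces_cast, pieces_starAppend, pieces_starPow] at h
    exact Fin.ext (List.eq_of_flatten_replicate_append_eq hst i.is_le j.is_le h)
  exact ⟨wpow w k, List.ofFn tree, List.nodup_ofFn.2 tree_injective, by simp⟩

theorem stmt_18_general {α : Type u} (R : RegularExpression α)
    (hcond : [] ∈ R.matches' ∨ Overlaps R.matches' R.star.matches') :
    InfinitelyAmbiguous R.star := by
  rcases hcond with hε | ⟨x, y, a, ha, hx, hxa, hay, hy⟩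
  · obtain ⟨tε⟩ := ParseTree.nonempty_of_mem_matches' hε
    exact infinitelyAmbiguous_star_of_pieces_ne (.starNil : ParseTree R.star [])
      (.starCons tε .starNil) (by simp)
  · obtain ⟨tx⟩ := ParseTree.nonempty_of_mem_matches' hx
    obtain ⟨txa⟩ := ParseTree.nonempty_of_mem_matches' hxa
    obtain ⟨tay⟩ := ParseTree.nonempty_of_mem_matches' hay
    obtain ⟨ty⟩ := ParseTree.nonempty_of_mem_matches' hy
    exact infinitelyAmbiguous_star_of_pieces_ne (.starCons tx tay)
      ((List.append_assoc x a y) ▸ .starCons txa ty) (by simp [ha])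

/-- ⟸ direction of Theorem 3(a): for unambiguous `R`, if `ε ∈ L(R)` or
`L(R)` and `L(R*)` overlap, then `R*` is infinitely ambiguous. -/
theorem stmt_18 {α : Type u} (R : RegularExpression α) (h : Unambiguous R)
    (hcond : [] ∈ R.matches' ∨ Overlaps R.matches' R.star.matches') :
    InfinitelyAmbiguous R.star :=
  stmt_18_general R hcond
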